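/- Let d, l be positive integers, n ≥ 2d, σ : ℝ → ℝ a differentiable function, K₁ ∈ ℝ^{l×d}, K₂ ∈ ℝ^{l×(n−2d)}, and a, b ∈ ℝ^l. Then the extended module E_up : ℝⁿ → ℝⁿ defined by E_up(p, q, c) = (p + K₁ᵀ(a ⊙ σ(K₁q + K₂c + b)), q, c) for p, q ∈ ℝ^d, c ∈ ℝ^{n−2d} (σ applied componentwise, ⊙ the elementwise product) is an extended symplectic map with latent dimension 2d: it has the form (p, q, c) ↦ (φ(p, q, c), c) with (p,q) ↦ φ(p, q, c) a symplectic map of ℝ^{2d} for each fixed c. The same holds for E_low(p, q, c) = (p, K₁ᵀ(a ⊙ σ(K₁p + K₂c + b)) + q, c). -/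

import Mathlib

open Matrix

/-- Partial derivative of `F` at `y` in the `i`-th coordinate direction. -/
noncomputable def pd {n : ℕ} (F : (Fin n → ℝ) → ℝ) (y : Fin n → ℝ) (i : Fin n) : ℝ :=
  fderiv ℝ F y (Pi.single i 1)

/-- The canonical `2d × 2d` symplectic matrix `J = ((0, I_d), (-I_d, 0))`. -/
def Jmat (d : ℕ) : Matrix (Fin (2*d)) (Fin (2*d)) ℝ := fun i j =>
  if (i:ℕ) < d ∧ (j:ℕ) = (i:ℕ) + d then 1
  else if (j:ℕ) < d ∧ (i:ℕ) = (j:ℕ) + d then -1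
  else 0

/-- The upper-left `2d × 2d` block of the Jacobian of `Φ : ℝ^{2d+m} → ℝ^{2d+m}`, i.e. the
Jacobian of `(p,q) ↦ φ(p, q, c)` for the fixed value `c` of the last `m` coordinates. -/
noncomputable def blockJac {d m : ℕ} (Φ : (Fin (2*d+m) → ℝ) → (Fin (2*d+m) → ℝ))
    (x : Fin (2*d+m) → ℝ) : Matrix (Fin (2*d)) (Fin (2*d)) ℝ :=
  fun i j => pd (fun z => Φ z (Fin.castLE (Nat.le_add_right _ _) i)) x
    (Fin.castLE (Nat.le_add_right _ _) j)

/-- The map `(u, c) ↦ K₁ᵀ(a ⊙ σ(K₁u + K₂c + b))`, `σ` acting componentwise, `⊙` being the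
elementwise product. -/
noncomputable def extMod {d l m : ℕ} (σ : ℝ → ℝ) (K₁ : Matrix (Fin l) (Fin d) ℝ)
    (K₂ : Matrix (Fin l) (Fin m) ℝ) (a b : Fin l → ℝ) (u : Fin d → ℝ) (c : Fin m → ℝ) :
    Fin d → ℝ :=
  fun i => ∑ r, K₁ r i * (a r * σ ((∑ s, K₁ r s * u s) + (∑ s, K₂ r s * c s) + b r))

/-- The upper extended module `E_up(p, q, c) = (p + K₁ᵀ(a ⊙ σ(K₁q + K₂c + b)), q, c)` on
`ℝ^{2d+m}`: coordinates `< d` are `p`, coordinates in `[d, 2d)` are `q`, the rest are `c`. -/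
noncomputable def Eup {d l m : ℕ} (σ : ℝ → ℝ) (K₁ : Matrix (Fin l) (Fin d) ℝ)
    (K₂ : Matrix (Fin l) (Fin m) ℝ) (a b : Fin l → ℝ) (x : Fin (2*d+m) → ℝ) :
    Fin (2*d+m) → ℝ :=
  fun i => if h : (i:ℕ) < d then
      x i + extMod σ K₁ K₂ a b
        (fun s : Fin d => x ⟨(s:ℕ) + d, by have := s.isLt; omega⟩)
        (fun s : Fin m => x ⟨2*d + (s:ℕ), by have := s.isLt; omega⟩) ⟨i, h⟩
    else x i

/-- The lower extended module `E_low(p, q, c) = (p, K₁ᵀ(a ⊙ σ(K₁p + K₂c + b)) + q, c)`. -/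
noncomputable def Elow {d l m : ℕ} (σ : ℝ → ℝ) (K₁ : Matrix (Fin l) (Fin d) ℝ)
    (K₂ : Matrix (Fin l) (Fin m) ℝ) (a b : Fin l → ℝ) (x : Fin (2*d+m) → ℝ) :
    Fin (2*d+m) → ℝ :=
  fun i => if (i:ℕ) < d then x i
    else if h2 : (i:ℕ) < 2*d then
      x i + extMod σ K₁ K₂ a b
        (fun s : Fin d => x ⟨(s:ℕ), by have := s.isLt; omega⟩)
        (fun s : Fin m => x ⟨2*d + (s:ℕ), by have := s.isLt; omega⟩)
        ⟨(i:ℕ) - d, by omega⟩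
    else x i

section aux12

variable {d l m : ℕ}

def ePf (s : Fin d) : Fin (2*d+m) := ⟨(s:ℕ), by have := s.isLt; omega⟩
def eQf (s : Fin d) : Fin (2*d+m) := ⟨(s:ℕ)+d, by have := s.isLt; omega⟩
def eCf (s : Fin m) : Fin (2*d+m) := ⟨2*d+(s:ℕ), by have := s.isLt; omega⟩

variable (σ : ℝ → ℝ) (K₁ : Matrix (Fin l) (Fin d) ℝ)
    (K₂ : Matrix (Fin l) (Fin m) ℝ) (a b : Fin l → ℝ)

noncomputable def Lr (e : Fin d → Fin (2*d+m)) (r : Fin l) : (Fin (2*d+m) → ℝ) →L[ℝ] ℝ :=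
  (∑ s, K₁ r s • ContinuousLinearMap.proj (R := ℝ) (φ := fun _ : Fin (2*d+m) => ℝ) (e s))
  + ∑ s, K₂ r s • ContinuousLinearMap.proj (R := ℝ) (φ := fun _ : Fin (2*d+m) => ℝ) (eCf s)

noncomputable def argE (e : Fin d → Fin (2*d+m)) (x : Fin (2*d+m) → ℝ) (r : Fin l) : ℝ :=
  (∑ s, K₁ r s * x (e s)) + (∑ s, K₂ r s * x (eCf s)) + b r

lemma Lr_apply (e : Fin d → Fin (2*d+m)) (r : Fin l) (v : Fin (2*d+m) → ℝ) :
    Lr K₁ K₂ e r v = (∑ s, K₁ r s * v (e s)) + ∑ s, K₂ r s * v (eCf s) := by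
  simp [Lr, ContinuousLinearMap.sum_apply, smul_eq_mul]

lemma hasFDerivAt_argE (e : Fin d → Fin (2*d+m)) (r : Fin l) (x : Fin (2*d+m) → ℝ) :
    HasFDerivAt (fun z => argE K₁ K₂ b e z r) (Lr K₁ K₂ e r) x := by
  have h : (fun z => argE K₁ K₂ b e z r) = fun z => Lr K₁ K₂ e r z + b r := by
    funext z; rw [Lr_apply]; rfl
  rw [h]
  exact (Lr K₁ K₂ e r).hasFDerivAt.add_const _

lemma hasFDerivAt_main (hσ : Differentiable ℝ σ) (e : Fin d → Fin (2*d+m)) (i₀ : Fin d)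
    (x : Fin (2*d+m) → ℝ) :
    HasFDerivAt (fun z => ∑ r, K₁ r i₀ * (a r * σ (argE K₁ K₂ b e z r)))
      (∑ r, (K₁ r i₀ * (a r * deriv σ (argE K₁ K₂ b e x r))) • Lr K₁ K₂ e r) x := by
  apply HasFDerivAt.fun_sum
  intro r _
  have h1 := hasFDerivAt_argE K₁ K₂ b e r x
  have h2 : HasFDerivAt (fun z => σ (argE K₁ K₂ b e z r))
      (deriv σ (argE K₁ K₂ b e x r) • Lr K₁ K₂ e r) x :=
    (hσ _).hasDerivAt.comp_hasFDerivAt x h1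
  have h3 := (h2.const_mul (a r)).const_mul (K₁ r i₀)
  refine h3.congr_fderiv ?_
  rw [smul_smul, smul_smul, mul_assoc]

lemma pd_proj (k j : Fin (2*d+m)) (x : Fin (2*d+m) → ℝ) :
    pd (fun z => z k) x j = if (k:ℕ) = (j:ℕ) then 1 else 0 := by
  have h : fderiv ℝ (fun z : Fin (2*d+m) → ℝ => z k) x
      = ContinuousLinearMap.proj (R := ℝ) (φ := fun _ : Fin (2*d+m) => ℝ) k :=
    HasFDerivAt.fderiv (by
      exact (ContinuousLinearMap.proj (R := ℝ) (φ := fun _ : Fin (2*d+m) => ℝ) k).hasFDerivAt)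
  rw [pd, h]
  simp [Pi.single_apply, Fin.ext_iff, eq_comm]

lemma pd_main (hσ : Differentiable ℝ σ) (e : Fin d → Fin (2*d+m)) (i₀ : Fin d)
    (k : Fin (2*d+m)) (x : Fin (2*d+m) → ℝ) (j : Fin (2*d+m)) :
    pd (fun z => z k + ∑ r, K₁ r i₀ * (a r * σ (argE K₁ K₂ b e z r))) x j
      = (if (k:ℕ) = (j:ℕ) then 1 else 0)
        + ∑ r, K₁ r i₀ * (a r * deriv σ (argE K₁ K₂ b e x r))
            * Lr K₁ K₂ e r (Pi.single j 1) := by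
  have h : fderiv ℝ (fun z => z k + ∑ r, K₁ r i₀ * (a r * σ (argE K₁ K₂ b e z r))) x
      = ContinuousLinearMap.proj (R := ℝ) (φ := fun _ : Fin (2*d+m) => ℝ) k
        + ∑ r, (K₁ r i₀ * (a r * deriv σ (argE K₁ K₂ b e x r))) • Lr K₁ K₂ e r :=
    HasFDerivAt.fderiv (by
      have hk : HasFDerivAt (fun z : Fin (2*d+m) → ℝ => z k)
          (ContinuousLinearMap.proj (R := ℝ) (φ := fun _ : Fin (2*d+m) => ℝ) k) x := by
        exact (ContinuousLinearMap.proj (R := ℝ)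
          (φ := fun _ : Fin (2*d+m) => ℝ) k).hasFDerivAt
      exact hk.add (hasFDerivAt_main σ K₁ K₂ a b hσ e i₀ x))
  rw [pd, h]
  simp [ContinuousLinearMap.sum_apply, Pi.single_apply, Fin.ext_iff, eq_comm, smul_eq_mul,
    mul_assoc]


lemma sum_single_eC (r : Fin l) (t : Fin (2*d+m)) (ht : (t:ℕ) < 2*d) :
    ∑ s, K₂ r s * (Pi.single t (1:ℝ) : Fin (2*d+m) → ℝ) (eCf s) = 0 := by
  apply Finset.sum_eq_zero
  intro s _
  rw [Pi.single_eq_of_ne]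
  · ring
  · intro h
    rw [Fin.ext_iff] at h
    simp only [eCf] at h
    omega

lemma sum_single_hit (r : Fin l) (e : Fin d → Fin (2*d+m)) (j : Fin d)
    (hinj : ∀ s, e s = e j → s = j) :
    ∑ s, K₁ r s * (Pi.single (e j) (1:ℝ) : Fin (2*d+m) → ℝ) (e s) = K₁ r j := by
  rw [Finset.sum_eq_single j]
  · simp
  · intro s _ hs
    rw [Pi.single_eq_of_ne (fun h => hs (hinj s h))]; ring
  · simp

lemma sum_single_miss (r : Fin l) (e : Fin d → Fin (2*d+m)) (t : Fin (2*d+m))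
    (hmiss : ∀ s, e s ≠ t) :
    ∑ s, K₁ r s * (Pi.single t (1:ℝ) : Fin (2*d+m) → ℝ) (e s) = 0 := by
  apply Finset.sum_eq_zero
  intro s _
  rw [Pi.single_eq_of_ne (hmiss s)]; ring

lemma Lr_eQ_eP (r : Fin l) (j : Fin d) :
    Lr K₁ K₂ (eQf (m := m)) r (Pi.single (ePf j) 1) = 0 := by
  rw [Lr_apply, sum_single_miss, sum_single_eC]
  · ring
  · simp [ePf]; omega
  · intro s h
    rw [Fin.ext_iff] at h
    simp only [eQf, ePf] at h
    have := j.isLt; omega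

lemma Lr_eQ_eQ (r : Fin l) (j : Fin d) :
    Lr K₁ K₂ (eQf (m := m)) r (Pi.single (eQf j) 1) = K₁ r j := by
  rw [Lr_apply, sum_single_hit, sum_single_eC]
  · ring
  · simp [eQf]; omega
  · intro s h
    rw [Fin.ext_iff] at h
    simp only [eQf] at h
    exact Fin.ext (by omega)

lemma Lr_eP_eP (r : Fin l) (j : Fin d) :
    Lr K₁ K₂ (ePf (m := m)) r (Pi.single (ePf j) 1) = K₁ r j := by
  rw [Lr_apply, sum_single_hit, sum_single_eC]
  · ring
  · simp [ePf]; omega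
  · intro s h
    rw [Fin.ext_iff] at h
    simp only [ePf] at h
    exact Fin.ext (by omega)

lemma Lr_eP_eQ (r : Fin l) (j : Fin d) :
    Lr K₁ K₂ (ePf (m := m)) r (Pi.single (eQf j) 1) = 0 := by
  rw [Lr_apply, sum_single_miss, sum_single_eC]
  · ring
  · simp [eQf]; have := j.isLt; omega
  · intro s h
    rw [Fin.ext_iff] at h
    simp only [eQf, ePf] at h
    have := s.isLt; omega

end aux12

def eqv (d : ℕ) : (Fin d ⊕ Fin d) ≃ Fin (2*d) := finSumFinEquiv.trans (finCongr (two_mul d).symm)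

lemma eqv_inl {d : ℕ} (i : Fin d) : ((eqv d (Sum.inl i)) : ℕ) = (i:ℕ) := by
  simp [eqv]

lemma eqv_inr {d : ℕ} (i : Fin d) : ((eqv d (Sum.inr i)) : ℕ) = d + (i:ℕ) := by
  simp [eqv]
  omega

lemma Jmat_eqv {d : ℕ} (u v : Fin d ⊕ Fin d) :
    Jmat d (eqv d u) (eqv d v)
      = fromBlocks (0 : Matrix (Fin d) (Fin d) ℝ) 1 (-1) 0 u v := by
  rcases u with i | i <;> rcases v with j | j <;>
    simp only [Jmat, eqv_inl, eqv_inr, fromBlocks_apply₁₁, fromBlocks_apply₁₂,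
      fromBlocks_apply₂₁, fromBlocks_apply₂₂, Matrix.zero_apply, Matrix.neg_apply,
      Matrix.one_apply, Fin.ext_iff] <;>
    split_ifs <;>
    first
      | rfl
      | (exfalso; have := i.isLt; have := j.isLt; omega)
      | ring
      | (have := i.isLt; have := j.isLt; omega)

lemma conj_J {d : ℕ} (M : Matrix (Fin (2*d)) (Fin (2*d)) ℝ)
    (B : Matrix (Fin d ⊕ Fin d) (Fin d ⊕ Fin d) ℝ)
    (hM : ∀ u v, M (eqv d u) (eqv d v) = B u v)
    (hB : Bᵀ * fromBlocks 0 1 (-1) 0 * B = fromBlocks 0 1 (-1) 0) :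
    Mᵀ * Jmat d * M = Jmat d := by
  have hM' : M.submatrix (eqv d) (eqv d) = B := by
    ext u v; exact hM u v
  have hJ : (Jmat d).submatrix (eqv d) (eqv d) = fromBlocks 0 1 (-1) 0 := by
    ext u v; exact Jmat_eqv u v
  have key : (Mᵀ * Jmat d * M).submatrix (eqv d) (eqv d)
      = (Jmat d).submatrix (eqv d) (eqv d) := by
    rw [← Matrix.submatrix_mul_equiv (Mᵀ * Jmat d) M _ (eqv d) _,
        ← Matrix.submatrix_mul_equiv Mᵀ (Jmat d) _ (eqv d) _]
    have hMT : Mᵀ.submatrix (eqv d) (eqv d) = Bᵀ := by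
      rw [← Matrix.transpose_submatrix, hM']
    rw [hMT, hJ, hM', hB]
  ext i j
  have h2 := congrFun (congrFun key ((eqv d).symm i)) ((eqv d).symm j)
  simpa using h2


section aux13

variable {d l m : ℕ} (σ : ℝ → ℝ) (K₁ : Matrix (Fin l) (Fin d) ℝ)
    (K₂ : Matrix (Fin l) (Fin m) ℝ) (a b : Fin l → ℝ)

noncomputable def Smat (e : Fin d → Fin (2*d+m)) (x : Fin (2*d+m) → ℝ) :
    Matrix (Fin d) (Fin d) ℝ :=
  fun i j => ∑ r, K₁ r i * (a r * deriv σ (argE K₁ K₂ b e x r)) * K₁ r j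

lemma Smat_symm (e : Fin d → Fin (2*d+m)) (x : Fin (2*d+m) → ℝ) :
    (Smat σ K₁ K₂ a b e x)ᵀ = Smat σ K₁ K₂ a b e x := by
  ext i j
  simp only [Matrix.transpose_apply, Smat]
  exact Finset.sum_congr rfl fun r _ => by ring

lemma Eup_apply_P (i : Fin d) (z : Fin (2*d+m) → ℝ) :
    Eup σ K₁ K₂ a b z (ePf i)
      = z (ePf i) + ∑ r, K₁ r i * (a r * σ (argE K₁ K₂ b eQf z r)) := by
  have hk : ((ePf (d := d) (m := m) i : Fin (2*d+m)):ℕ) < d := i.isLt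
  simp only [Eup]
  rw [dif_pos hk]
  rfl

lemma Eup_apply_other (k : Fin (2*d+m)) (hk : ¬ (k:ℕ) < d) (z : Fin (2*d+m) → ℝ) :
    Eup σ K₁ K₂ a b z k = z k := by
  simp only [Eup]; rw [dif_neg hk]

lemma Elow_apply_P (i : Fin d) (z : Fin (2*d+m) → ℝ) :
    Elow σ K₁ K₂ a b z (ePf i) = z (ePf i) := by
  simp only [Elow]
  rw [if_pos (show ((ePf (d := d) (m := m) i : Fin (2*d+m)):ℕ) < d from i.isLt)]

lemma Elow_apply_Q (i : Fin d) (z : Fin (2*d+m) → ℝ) :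
    Elow σ K₁ K₂ a b z (eQf i)
      = z (eQf i) + ∑ r, K₁ r i * (a r * σ (argE K₁ K₂ b ePf z r)) := by
  have h1 : ¬ ((eQf (d := d) (m := m) i : Fin (2*d+m)):ℕ) < d := by
    simp only [eQf]; omega
  have h2 : ((eQf (d := d) (m := m) i : Fin (2*d+m)):ℕ) < 2*d := by
    have := i.isLt; simp only [eQf]; omega
  simp only [Elow]
  rw [if_neg h1, dif_pos h2]
  congr 1
  have hidx : (⟨((eQf (d := d) (m := m) i : Fin (2*d+m)):ℕ) - d, by omega⟩ : Fin d) = i := by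
    apply Fin.ext; simp [eQf]
  rw [show (⟨((eQf (d := d) (m := m) i : Fin (2*d+m)):ℕ) - d, by omega⟩ : Fin d) = i from hidx]
  rfl

lemma castLE_eqv_inl (i : Fin d) :
    Fin.castLE (Nat.le_add_right (2*d) m) (eqv d (Sum.inl i)) = ePf i := by
  apply Fin.ext
  simp [eqv_inl, ePf]

lemma castLE_eqv_inr (i : Fin d) :
    Fin.castLE (Nat.le_add_right (2*d) m) (eqv d (Sum.inr i)) = eQf i := by
  apply Fin.ext
  simp [eqv_inr, eQf]; omega

lemma blockJac_Eup (hσ : Differentiable ℝ σ) (x : Fin (2*d+m) → ℝ) (u v : Fin d ⊕ Fin d) :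
    blockJac (Eup σ K₁ K₂ a b) x (eqv d u) (eqv d v)
      = fromBlocks 1 (Smat σ K₁ K₂ a b eQf x) 0 1 u v := by
  rcases u with i | i <;> rcases v with j | j <;>
    simp only [blockJac, castLE_eqv_inl, castLE_eqv_inr]
  · rw [show (fun z => Eup σ K₁ K₂ a b z (ePf i)) = fun z =>
        z (ePf i) + ∑ r, K₁ r i * (a r * σ (argE K₁ K₂ b eQf z r)) from
      funext (Eup_apply_P σ K₁ K₂ a b i)]
    rw [pd_main σ K₁ K₂ a b hσ eQf i (ePf i) x (ePf j)]
    simp only [Lr_eQ_eP, mul_zero, Finset.sum_const_zero, add_zero]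
    simp only [fromBlocks_apply₁₁, Matrix.one_apply, ePf, Fin.ext_iff]
    exact if_congr Iff.rfl rfl rfl
  · rw [show (fun z => Eup σ K₁ K₂ a b z (ePf i)) = fun z =>
        z (ePf i) + ∑ r, K₁ r i * (a r * σ (argE K₁ K₂ b eQf z r)) from
      funext (Eup_apply_P σ K₁ K₂ a b i)]
    rw [pd_main σ K₁ K₂ a b hσ eQf i (ePf i) x (eQf j)]
    have hne : ¬ ((ePf (d := d) (m := m) i : Fin (2*d+m)):ℕ)
        = ((eQf (d := d) (m := m) j : Fin (2*d+m)):ℕ) := by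
      have := i.isLt; simp only [ePf, eQf]; omega
    rw [if_neg hne]
    simp only [Lr_eQ_eQ, fromBlocks_apply₁₂, Smat, zero_add]
  · rw [show (fun z => Eup σ K₁ K₂ a b z (eQf i)) = fun z => z (eQf i) from
      funext (Eup_apply_other σ K₁ K₂ a b (eQf i) (by simp only [eQf]; omega))]
    rw [pd_proj]
    have hne : ¬ ((eQf (d := d) (m := m) i : Fin (2*d+m)):ℕ)
        = ((ePf (d := d) (m := m) j : Fin (2*d+m)):ℕ) := by
      have := j.isLt; simp only [ePf, eQf]; omega
    rw [if_neg hne]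
    simp
  · rw [show (fun z => Eup σ K₁ K₂ a b z (eQf i)) = fun z => z (eQf i) from
      funext (Eup_apply_other σ K₁ K₂ a b (eQf i) (by simp only [eQf]; omega))]
    rw [pd_proj]
    simp only [fromBlocks_apply₂₂, Matrix.one_apply, eQf, Fin.ext_iff]
    by_cases h : (i:ℕ) = (j:ℕ)
    · rw [if_pos (by omega)]; exact if_pos (by omega)
    · rw [if_neg (by omega)]; exact if_neg (by omega)

lemma blockJac_Elow (hσ : Differentiable ℝ σ) (x : Fin (2*d+m) → ℝ) (u v : Fin d ⊕ Fin d) :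
    blockJac (Elow σ K₁ K₂ a b) x (eqv d u) (eqv d v)
      = fromBlocks 1 0 (Smat σ K₁ K₂ a b ePf x) 1 u v := by
  rcases u with i | i <;> rcases v with j | j <;>
    simp only [blockJac, castLE_eqv_inl, castLE_eqv_inr]
  · rw [show (fun z => Elow σ K₁ K₂ a b z (ePf i)) = fun z => z (ePf i) from
      funext (Elow_apply_P σ K₁ K₂ a b i)]
    rw [pd_proj]
    simp only [fromBlocks_apply₁₁, Matrix.one_apply, ePf, Fin.ext_iff]
    exact if_congr Iff.rfl rfl rfl
  · rw [show (fun z => Elow σ K₁ K₂ a b z (ePf i)) = fun z => z (ePf i) from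
      funext (Elow_apply_P σ K₁ K₂ a b i)]
    rw [pd_proj]
    have hne : ¬ ((ePf (d := d) (m := m) i : Fin (2*d+m)):ℕ)
        = ((eQf (d := d) (m := m) j : Fin (2*d+m)):ℕ) := by
      have := i.isLt; simp only [ePf, eQf]; omega
    rw [if_neg hne]
    simp
  · rw [show (fun z => Elow σ K₁ K₂ a b z (eQf i)) = fun z =>
        z (eQf i) + ∑ r, K₁ r i * (a r * σ (argE K₁ K₂ b ePf z r)) from
      funext (Elow_apply_Q σ K₁ K₂ a b i)]
    rw [pd_main σ K₁ K₂ a b hσ ePf i (eQf i) x (ePf j)]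
    have hne : ¬ ((eQf (d := d) (m := m) i : Fin (2*d+m)):ℕ)
        = ((ePf (d := d) (m := m) j : Fin (2*d+m)):ℕ) := by
      have := j.isLt; simp only [ePf, eQf]; omega
    rw [if_neg hne]
    simp only [Lr_eP_eP, fromBlocks_apply₂₁, Smat, zero_add]
  · rw [show (fun z => Elow σ K₁ K₂ a b z (eQf i)) = fun z =>
        z (eQf i) + ∑ r, K₁ r i * (a r * σ (argE K₁ K₂ b ePf z r)) from
      funext (Elow_apply_Q σ K₁ K₂ a b i)]
    rw [pd_main σ K₁ K₂ a b hσ ePf i (eQf i) x (eQf j)]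
    simp only [Lr_eP_eQ, mul_zero, Finset.sum_const_zero, add_zero]
    simp only [fromBlocks_apply₂₂, Matrix.one_apply, eQf, Fin.ext_iff]
    by_cases h : (i:ℕ) = (j:ℕ)
    · rw [if_pos (by omega)]; exact if_pos (by omega)
    · rw [if_neg (by omega)]; exact if_neg (by omega)

end aux13

lemma hB_up {d : ℕ} (S : Matrix (Fin d) (Fin d) ℝ) (hS : Sᵀ = S) :
    (fromBlocks (1 : Matrix (Fin d) (Fin d) ℝ) S 0 1)ᵀ
        * fromBlocks (0 : Matrix (Fin d) (Fin d) ℝ) (1 : Matrix (Fin d) (Fin d) ℝ)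
            (-1 : Matrix (Fin d) (Fin d) ℝ) (0 : Matrix (Fin d) (Fin d) ℝ)
        * fromBlocks (1 : Matrix (Fin d) (Fin d) ℝ) S 0 1
      = fromBlocks (0 : Matrix (Fin d) (Fin d) ℝ) (1 : Matrix (Fin d) (Fin d) ℝ)
          (-1 : Matrix (Fin d) (Fin d) ℝ) (0 : Matrix (Fin d) (Fin d) ℝ) := by
  rw [fromBlocks_transpose, fromBlocks_multiply, fromBlocks_multiply]
  simp [hS]

lemma hB_low {d : ℕ} (S : Matrix (Fin d) (Fin d) ℝ) (hS : Sᵀ = S) :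
    (fromBlocks (1 : Matrix (Fin d) (Fin d) ℝ) (0 : Matrix (Fin d) (Fin d) ℝ) S
          (1 : Matrix (Fin d) (Fin d) ℝ))ᵀ
        * fromBlocks (0 : Matrix (Fin d) (Fin d) ℝ) (1 : Matrix (Fin d) (Fin d) ℝ)
            (-1 : Matrix (Fin d) (Fin d) ℝ) (0 : Matrix (Fin d) (Fin d) ℝ)
        * fromBlocks (1 : Matrix (Fin d) (Fin d) ℝ) (0 : Matrix (Fin d) (Fin d) ℝ) S
            (1 : Matrix (Fin d) (Fin d) ℝ)
      = fromBlocks (0 : Matrix (Fin d) (Fin d) ℝ) (1 : Matrix (Fin d) (Fin d) ℝ)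
          (-1 : Matrix (Fin d) (Fin d) ℝ) (0 : Matrix (Fin d) (Fin d) ℝ) := by
  rw [fromBlocks_transpose, fromBlocks_multiply, fromBlocks_multiply]
  simp [hS]


/-- the extended modules `E_up` and `E_low` are extended symplectic maps with
latent dimension `2d`: they fix the last `m = n - 2d` coordinates, and for each fixed `c`
the induced map on the first `2d` coordinates is symplectic (its Jacobian `M` satisfies
`Mᵀ J M = J`). -/
theorem statement_12 {d l m : ℕ} (hd : 0 < d) (hl : 0 < l)
    (σ : ℝ → ℝ) (hσ : Differentiable ℝ σ)
    (K₁ : Matrix (Fin l) (Fin d) ℝ) (K₂ : Matrix (Fin l) (Fin m) ℝ) (a b : Fin l → ℝ) :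
    ((∀ (x : Fin (2*d+m) → ℝ) (i : Fin (2*d+m)), 2*d ≤ (i:ℕ) → Eup σ K₁ K₂ a b x i = x i) ∧
     (∀ x : Fin (2*d+m) → ℝ,
        (blockJac (Eup σ K₁ K₂ a b) x)ᵀ * Jmat d * blockJac (Eup σ K₁ K₂ a b) x = Jmat d)) ∧
    ((∀ (x : Fin (2*d+m) → ℝ) (i : Fin (2*d+m)), 2*d ≤ (i:ℕ) → Elow σ K₁ K₂ a b x i = x i) ∧
     (∀ x : Fin (2*d+m) → ℝ,
        (blockJac (Elow σ K₁ K₂ a b) x)ᵀ * Jmat d * blockJac (Elow σ K₁ K₂ a b) x = Jmat d)) := by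
  refine ⟨⟨?_, ?_⟩, ?_, ?_⟩
  · intro x i hi
    simp only [Eup]
    rw [dif_neg (by omega)]
  · intro x
    exact conj_J _ (fromBlocks 1 (Smat σ K₁ K₂ a b eQf x) 0 1)
      (blockJac_Eup σ K₁ K₂ a b hσ x) (hB_up _ (Smat_symm σ K₁ K₂ a b eQf x))
  · intro x i hi
    simp only [Elow]
    rw [if_neg (by omega), dif_neg (by omega)]
  · intro x
    exact conj_J _ (fromBlocks 1 0 (Smat σ K₁ K₂ a b ePf x) 1)
      (blockJac_Elow σ K₁ K₂ a b hσ x) (hB_low _ (Smat_symm σ K₁ K₂ a b ePf x))
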